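/- arXiv:1504.02989 — 7 statements merged into one kernel-verified Lean document; each statement's English description precedes it below -/
import Mathlib

section
/- Let n ≥ 3 and m = (m_1,…,m_n) ∈ ℝ^n with m_0 := 1. If L_P(m) > 0 for all P ∈ 𝒫_k and all k with 1 ≤ k ≤ n−2, then there exists a polynomial P* ∈ 𝒫_n such that L_{P*}(m) ≤ L_P(m) for all P ∈ 𝒫_n. -/
/-!
Write `P_S = ∏_{s ∈ S} (X - s)` (`rootPoly S`) and `‖S‖ = ∏_{s ∈ S} (s + 1)` (`succProd S`);
the coefficients of `P_S` have absolute sum at most `‖S‖`. If `P_S ≥ 0` on `ℕ₀` and `g ∉ S`, the roots `U` of `P_S` above `g`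
are even in number, so `P_S = P_T · ∏_{u ∈ U} (u - X)` with `T` the roots below `g`, and again
`P_T ≥ 0` on `ℕ₀`. When all `u ∈ U` are large, each factor `u - X` multiplies `L` by `u` up to
a relative error `O(1/u)`, so `L(P_S) ≳ (∏_{u ∈ U} u) · L(P_T)`.

Pigeonhole gives a non-root `g` in any window `[W, W + #S]`. By induction on `j ≤ n - 2`, in
steps of two, `L(P_T) ≥ δ ‖T‖` whenever `#T ≤ j` and `P_T ≥ 0` on `ℕ₀`: either `S` lies below
the window (finitely many cases, where `L > 0` by hypothesis) or `U ≠ ∅`, `#T ≤ #S - 2` and the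
estimate propagates. The same dichotomy for `#S = n` shows that `L` has finite sublevel sets on
`𝒫_n`, hence attains its minimum.
-/

open Polynomial

/-- `Lf P m = Σ_k p_k m_k`, the affine form associated to a polynomial `P`. -/
noncomputable def Lf (P : Polynomial ℝ) (m : ℕ → ℝ) : ℝ := P.sum fun k a => a * m k

/-- `𝒫_j`: monic real polynomials of degree `j` with `j` distinct roots in `ℕ₀`,
nonnegative on `ℕ₀`. -/
def PolyP (j : ℕ) (P : Polynomial ℝ) : Prop :=
  P.Monic ∧ P.natDegree = j ∧
    (∃ S : Finset ℕ, S.card = j ∧ P = ∏ a ∈ S, (X - C (a : ℝ))) ∧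
    ∀ x : ℕ, 0 ≤ P.eval (x : ℝ)

/-- `(m_1,…,m_j)` (with `m 0 = 1`) is realizable on `ℕ₀`: there is a probability
measure on the nonnegative integers whose `k`-th moment is `m k` for `k ≤ j`. -/
def RealizableN0 (j : ℕ) (m : ℕ → ℝ) : Prop :=
  ∃ μ : ℕ → ℝ, (∀ x, 0 ≤ μ x) ∧
    ∀ k, k ≤ j → HasSum (fun x : ℕ => (x : ℝ) ^ k * μ x) (m k)

/-- I-realizability on `ℕ₀`. -/
def IRealizable (j : ℕ) (m : ℕ → ℝ) : Prop :=
  RealizableN0 j m ∧ ∀ P : Polynomial ℝ, PolyP j P ∨ PolyP (j - 1) P → 0 < Lf P m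

/-- B-realizability on `ℕ₀`. -/
def BRealizable (j : ℕ) (m : ℕ → ℝ) : Prop :=
  RealizableN0 j m ∧ ∃ P : Polynomial ℝ, (PolyP j P ∨ PolyP (j - 1) P) ∧ Lf P m = 0

open Finset Filter

noncomputable def rootPoly (S : Finset ℕ) : ℝ[X] := ∏ a ∈ S, (X - C (a : ℝ))

def NonnegOnNat (P : ℝ[X]) : Prop := ∀ x : ℕ, 0 ≤ P.eval (x : ℝ)

noncomputable def succProd (S : Finset ℕ) : ℝ := ∏ s ∈ S, ((s : ℝ) + 1)

lemma monic_rootPoly (S : Finset ℕ) : (rootPoly S).Monic :=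
  monic_prod_of_monic _ _ fun a _ => monic_X_sub_C (a : ℝ)

lemma natDegree_rootPoly (S : Finset ℕ) : (rootPoly S).natDegree = #S :=
  natDegree_finsetProd_X_sub_C_eq_card _ _

lemma polyP_rootPoly {S : Finset ℕ} (hS : NonnegOnNat (rootPoly S)) : PolyP #S (rootPoly S) :=
  ⟨monic_rootPoly S, natDegree_rootPoly S, ⟨S, rfl, rfl⟩, hS⟩

lemma eval_rootPoly (S : Finset ℕ) (x : ℝ) : (rootPoly S).eval x = ∏ s ∈ S, (x - s) := by
  simp [rootPoly, eval_prod]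

lemma rootPoly_union {T U : Finset ℕ} (h : Disjoint T U) :
    rootPoly (T ∪ U) = rootPoly T * rootPoly U :=
  prod_union h

lemma rootPoly_eq_prod_C_sub_X {U : Finset ℕ} (hU : Even #U) :
    rootPoly U = ∏ u ∈ U, (C (u : ℝ) - X) := by
  simp_rw [← neg_sub X, prod_neg, hU.neg_one_pow, one_mul, rootPoly]

lemma eval_rootPoly_pos_of_lt {S : Finset ℕ} {x : ℝ} (h : ∀ s ∈ S, (s : ℝ) < x) :
    0 < (rootPoly S).eval x := by
  rw [eval_rootPoly]
  exact prod_pos fun s hs => sub_pos.2 (h s hs)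

lemma neg_one_pow_mul_eval_rootPoly_pos {S : Finset ℕ} {x : ℝ} (h : ∀ s ∈ S, x < s) :
    0 < (-1) ^ #S * (rootPoly S).eval x := by
  rw [eval_rootPoly, ← prod_const, ← prod_mul_distrib]
  exact prod_pos fun s hs => by rw [neg_one_mul, neg_sub]; exact sub_pos.2 (h s hs)

lemma nonnegOnNat_rootPoly_range (n : ℕ) : NonnegOnNat (rootPoly (range n)) := by
  intro x
  rcases lt_or_ge x n with hx | hx
  · rw [eval_rootPoly, prod_eq_zero (mem_range.2 hx) (sub_self _)]
  · exact (eval_rootPoly_pos_of_lt fun s hs => by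
      exact_mod_cast (mem_range.1 hs).trans_le hx).le

lemma exists_split_at_nonroot {S : Finset ℕ} (hS : NonnegOnNat (rootPoly S)) {g : ℕ} (hg : g ∉ S) :
    ∃ T U : Finset ℕ, Disjoint T U ∧ T ∪ U = S ∧ (∀ t ∈ T, t < g) ∧ (∀ u ∈ U, g < u) ∧
      Even #U ∧ NonnegOnNat (rootPoly T) := by
  set T := S.filter (· < g)
  set U := S.filter (g < ·)
  have hTU : Disjoint T U := disjoint_filter.2 fun s _ h => (lt_asymm h).elim
  have hS_eq : T ∪ U = S := by
    ext s
    simp only [T, U, mem_union, mem_filter]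
    constructor
    · rintro (⟨hs, -⟩ | ⟨hs, -⟩) <;> exact hs
    · intro hs
      rcases lt_trichotomy s g with h | rfl | h
      exacts [Or.inl ⟨hs, h⟩, (hg hs).elim, Or.inr ⟨hs, h⟩]
  have hT : ∀ t ∈ T, t < g := fun t ht => (mem_filter.1 ht).2
  have hU : ∀ u ∈ U, g < u := fun u hu => (mem_filter.1 hu).2
  have heval (x : ℝ) : (rootPoly S).eval x = (rootPoly T).eval x * (rootPoly U).eval x := by
    rw [← hS_eq, rootPoly_union hTU, eval_mul]
  have hU_sign (x : ℝ) (hx : x ≤ g) : 0 < (-1) ^ #U * (rootPoly U).eval x :=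
    neg_one_pow_mul_eval_rootPoly_pos fun u hu => hx.trans_lt (by exact_mod_cast hU u hu)
  have hUeven : Even #U := by
    refine (Nat.even_or_odd #U).resolve_right fun hodd => ?_
    have hTg : 0 < (rootPoly T).eval (g : ℝ) :=
      eval_rootPoly_pos_of_lt fun t ht => by exact_mod_cast hT t ht
    have hUg := hU_sign g le_rfl
    rw [hodd.neg_one_pow] at hUg
    nlinarith [hS g, heval g]
  refine ⟨T, U, hTU, hS_eq, hT, hU, hUeven, fun x => ?_⟩
  rcases lt_or_ge x g with hx | hx
  · refine nonneg_of_mul_nonneg_left ((heval x).symm ▸ hS x) ?_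
    simpa [hUeven.neg_one_pow] using hU_sign x (by exact_mod_cast hx.le)
  · exact (eval_rootPoly_pos_of_lt fun t ht => by exact_mod_cast (hT t ht).trans_le hx).le

section Functional

variable (n : ℕ) (m : ℕ → ℝ)

/-- Dropping the moments beyond `n` bounds the functional by the first `n + 1` coefficients of
every polynomial, so no degree bookkeeping is needed below. -/
noncomputable def truncLf : ℝ[X] →ₗ[ℝ] ℝ := ∑ k ∈ range (n + 1), m k • lcoeff ℝ k

noncomputable def coeffSum (Q : ℝ[X]) : ℝ := ∑ k ∈ range (n + 1), |Q.coeff k|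

noncomputable def momentBound : ℝ := ∑ k ∈ range (n + 1), |m k|

lemma truncLf_apply (Q : ℝ[X]) : truncLf n m Q = ∑ k ∈ range (n + 1), Q.coeff k * m k := by
  simp [truncLf, mul_comm]

lemma Lf_eq_truncLf {Q : ℝ[X]} (hQ : Q.natDegree ≤ n) : Lf Q m = truncLf n m Q := by
  rw [Lf, sum_over_range' Q (fun k => zero_mul (m k)) (n + 1) (Nat.lt_succ_of_le hQ),
    truncLf_apply]

lemma truncLf_one : truncLf n m 1 = m 0 := by
  simp [truncLf_apply, coeff_one]

variable {n m}

lemma momentBound_nonneg : 0 ≤ momentBound n m :=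
  sum_nonneg fun _ _ => abs_nonneg _

lemma coeffSum_nonneg (Q : ℝ[X]) : 0 ≤ coeffSum n Q :=
  sum_nonneg fun _ _ => abs_nonneg _

lemma coeffSum_one : coeffSum n 1 = 1 := by
  simp [coeffSum, coeff_one, apply_ite (abs : ℝ → ℝ)]

lemma coeffSum_neg (Q : ℝ[X]) : coeffSum n (-Q) = coeffSum n Q := by
  simp [coeffSum]

lemma coeffSum_X_mul_le (Q : ℝ[X]) : coeffSum n (X * Q) ≤ coeffSum n Q := by
  rw [coeffSum, coeffSum, sum_range_succ']
  simp only [coeff_X_mul_zero, abs_zero, add_zero, coeff_X_mul]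
  exact sum_le_sum_of_subset_of_nonneg (range_subset_range.2 n.le_succ)
    fun _ _ _ => abs_nonneg _

lemma coeffSum_mul_X_sub_C_le (Q : ℝ[X]) (a : ℝ) :
    coeffSum n (Q * (X - C a)) ≤ (|a| + 1) * coeffSum n Q := by
  have hcoeff (k : ℕ) : (Q * (X - C a)).coeff k = (X * Q).coeff k - a * Q.coeff k := by
    rw [mul_sub, coeff_sub, coeff_mul_C, mul_comm Q X, mul_comm (Q.coeff k)]
  calc coeffSum n (Q * (X - C a)) ≤ coeffSum n (X * Q) + |a| * coeffSum n Q := by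
        rw [coeffSum, coeffSum, coeffSum, mul_sum, ← sum_add_distrib]
        refine sum_le_sum fun k _ => ?_
        rw [hcoeff, ← abs_mul]
        exact abs_sub _ _
    _ ≤ (|a| + 1) * coeffSum n Q := by linarith [coeffSum_X_mul_le (n := n) Q]

lemma coeffSum_mul_C_sub_X_le (Q : ℝ[X]) (a : ℝ) :
    coeffSum n (Q * (C a - X)) ≤ (|a| + 1) * coeffSum n Q := by
  rw [← neg_sub, mul_neg, coeffSum_neg]
  exact coeffSum_mul_X_sub_C_le Q a

lemma coeffSum_mul_prod_le {ι : Type*} (Q : ℝ[X]) (U : Finset ι) (f : ι → ℝ[X]) (c : ι → ℝ)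
    (hc : ∀ i ∈ U, 0 ≤ c i) (hf : ∀ i ∈ U, ∀ Q, coeffSum n (Q * f i) ≤ c i * coeffSum n Q) :
    coeffSum n (Q * ∏ i ∈ U, f i) ≤ coeffSum n Q * ∏ i ∈ U, c i := by
  induction U using Finset.cons_induction with
  | empty => simp
  | cons a U ha ih =>
    have ih := ih (fun i hi => hc i (mem_cons_of_mem hi)) fun i hi => hf i (mem_cons_of_mem hi)
    rw [prod_cons, prod_cons, show Q * (f a * ∏ i ∈ U, f i) = (Q * ∏ i ∈ U, f i) * f a by ring]
    calc coeffSum n ((Q * ∏ i ∈ U, f i) * f a) ≤ c a * coeffSum n (Q * ∏ i ∈ U, f i) :=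
          hf a (mem_cons_self a U) _
      _ ≤ c a * (coeffSum n Q * ∏ i ∈ U, c i) := by gcongr; exact hc a (mem_cons_self a U)
      _ = coeffSum n Q * (c a * ∏ i ∈ U, c i) := by ring

lemma coeffSum_rootPoly_le (S : Finset ℕ) : coeffSum n (rootPoly S) ≤ succProd S := by
  have h := coeffSum_mul_prod_le (n := n) 1 S (fun s : ℕ => X - C (s : ℝ))
    (fun s : ℕ => |(s : ℝ)| + 1) (fun _ _ => by positivity) fun s _ Q => coeffSum_mul_X_sub_C_le Q s
  simp only [one_mul, coeffSum_one, Nat.abs_cast] at h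
  exact h

lemma abs_truncLf_le (Q : ℝ[X]) : |truncLf n m Q| ≤ momentBound n m * coeffSum n Q := by
  rw [truncLf_apply, coeffSum, mul_sum]
  refine (abs_sum_le_sum_abs _ _).trans (sum_le_sum fun k hk => ?_)
  rw [abs_mul, mul_comm]
  exact mul_le_mul_of_nonneg_right
    (single_le_sum (f := fun i => |m i|) (fun i _ => abs_nonneg _) hk) (abs_nonneg _)

end Functional

section Products

variable {ι : Type*}

lemma mul_prod_add_one_sub_prod_le (U : Finset ι) (u : ι → ℝ) {W : ℝ} (hW : 0 ≤ W)
    (hu : ∀ i ∈ U, W ≤ u i) :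
    W * (∏ i ∈ U, (u i + 1) - ∏ i ∈ U, u i) ≤ #U * ∏ i ∈ U, (u i + 1) := by
  induction U using Finset.cons_induction with
  | empty => simp
  | cons a U ha ih =>
    have ih := ih fun i hi => hu i (mem_cons_of_mem hi)
    have hWa : W ≤ u a := hu a (mem_cons_self a U)
    have hP : 0 ≤ ∏ i ∈ U, (u i + 1) :=
      prod_nonneg fun i hi => by linarith [hu i (mem_cons_of_mem hi)]
    rw [prod_cons, prod_cons, card_cons]
    push_cast
    nlinarith [mul_le_mul_of_nonneg_left ih (hW.trans hWa), mul_nonneg (sub_nonneg.2 hWa) hP,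
      mul_nonneg (Nat.cast_nonneg (α := ℝ) #U) hP]

lemma succProd_pos (S : Finset ℕ) : 0 < succProd S :=
  prod_pos fun _ _ => by positivity

lemma succProd_union {T U : Finset ℕ} (h : Disjoint T U) :
    succProd (T ∪ U) = succProd T * succProd U :=
  prod_union h

lemma le_succProd_of_mem {S : Finset ℕ} {s : ℕ} (hs : s ∈ S) : (s : ℝ) + 1 ≤ succProd S := by
  rw [succProd, ← mul_prod_erase S _ hs]
  exact le_mul_of_one_le_right (by positivity) (one_le_prod fun t _ => by simp)

lemma succProd_le_two_pow_mul_prod {U : Finset ℕ} (hU : ∀ u ∈ U, 1 ≤ u) {k : ℕ} (hk : #U ≤ k) :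
    succProd U ≤ 2 ^ k * ∏ u ∈ U, (u : ℝ) := by
  calc succProd U ≤ ∏ u ∈ U, (2 * (u : ℝ)) := prod_le_prod (fun u _ => by positivity) fun u hu => by
        have : (1 : ℝ) ≤ u := by exact_mod_cast hU u hu
        linarith
    _ ≤ 2 ^ k * ∏ u ∈ U, (u : ℝ) := by
        rw [prod_mul_distrib, prod_const]
        gcongr
        norm_num

variable {n : ℕ} {m : ℕ → ℝ}

/-- Each factor `u - X` multiplies `truncLf` by `u` at the cost of `truncLf (X * ·)`, which
`coeffSum` controls; with the error in exactly this form the induction closes. -/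
lemma le_truncLf_mul_prod_C_sub_X (Q : ℝ[X]) (U : Finset ι) (u : ι → ℝ)
    (hu : ∀ i ∈ U, 0 ≤ u i) :
    (∏ i ∈ U, u i) * truncLf n m Q -
        momentBound n m * coeffSum n Q * (∏ i ∈ U, (u i + 1) - ∏ i ∈ U, u i) ≤
      truncLf n m (Q * ∏ i ∈ U, (C (u i) - X)) := by
  induction U using Finset.cons_induction with
  | empty => simp
  | cons a U ha ih =>
    have ih := ih fun i hi => hu i (mem_cons_of_mem hi)
    have hua : 0 ≤ u a := hu a (mem_cons_self a U)
    set Q' := Q * ∏ i ∈ U, (C (u i) - X)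
    have hQ' : coeffSum n Q' ≤ coeffSum n Q * ∏ i ∈ U, (u i + 1) :=
      coeffSum_mul_prod_le Q U _ _ (fun i hi => by linarith [hu i (mem_cons_of_mem hi)])
        fun i hi Q => by
          simpa [abs_of_nonneg (hu i (mem_cons_of_mem hi))] using coeffSum_mul_C_sub_X_le Q (u i)
    have hXQ' : truncLf n m (X * Q') ≤ momentBound n m * (coeffSum n Q * ∏ i ∈ U, (u i + 1)) :=
      (le_abs_self _).trans <| (abs_truncLf_le _).trans <|
        mul_le_mul_of_nonneg_left ((coeffSum_X_mul_le Q').trans hQ') momentBound_nonneg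
    have hstep : Q * ∏ i ∈ cons a U ha, (C (u i) - X) = u a • Q' - X * Q' := by
      rw [prod_cons, ← C_mul']
      ring
    rw [hstep, map_sub, map_smul, smul_eq_mul, prod_cons, prod_cons]
    linear_combination mul_le_mul_of_nonneg_left ih hua + hXQ'

end Products

section Coercivity

variable {n : ℕ} {m : ℕ → ℝ}

lemma le_truncLf_rootPoly_union {T U : Finset ℕ} (hTU : Disjoint T U) {δ W : ℝ} (hδ : 0 ≤ δ)
    (hT : δ * succProd T ≤ truncLf n m (rootPoly T)) (hU : Even #U) (hUn : #U ≤ n)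
    (hW : 1 ≤ W) (hUW : ∀ u ∈ U, W ≤ u) (hWδ : 2 * n * 2 ^ n * momentBound n m ≤ δ * W) :
    δ / 2 ^ (n + 1) * succProd (T ∪ U) ≤ truncLf n m (rootPoly (T ∪ U)) := by
  set Pu := ∏ u ∈ U, (u : ℝ)
  set A := succProd T
  set M := momentBound n m
  have hU₁ : ∀ u ∈ U, 1 ≤ u := fun u hu => by exact_mod_cast hW.trans (hUW u hu)
  have hPu : 0 ≤ Pu := by positivity
  have hUPu : succProd U ≤ 2 ^ n * Pu := succProd_le_two_pow_mul_prod hU₁ hUn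
  have hpeel := le_truncLf_mul_prod_C_sub_X (n := n) (m := m) (rootPoly T) U (fun u : ℕ => (u : ℝ))
    fun _ _ => Nat.cast_nonneg _
  rw [← rootPoly_eq_prod_C_sub_X hU, ← rootPoly_union hTU] at hpeel
  change Pu * _ - M * _ * (succProd U - Pu) ≤ _ at hpeel
  have hgap : W * (succProd U - Pu) ≤ n * (2 ^ n * Pu) :=
    (mul_prod_add_one_sub_prod_le U _ (by linarith) hUW).trans
      (mul_le_mul (by exact_mod_cast hUn) hUPu (succProd_pos U).le (Nat.cast_nonneg n))
  have herr : M * coeffSum n (rootPoly T) * (succProd U - Pu) ≤ δ / 2 * A * Pu := by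
    have hPuU : Pu ≤ succProd U := prod_le_prod (fun _ _ => by positivity) fun _ _ => by simp
    have hMA : 0 ≤ M * A := mul_nonneg momentBound_nonneg (succProd_pos T).le
    refine (mul_le_mul_of_nonneg_right (mul_le_mul_of_nonneg_left (coeffSum_rootPoly_le T)
      momentBound_nonneg) (sub_nonneg.2 hPuU)).trans
      (le_of_mul_le_mul_left ?_ (by linarith : 0 < W))
    calc W * (M * A * (succProd U - Pu)) = M * A * (W * (succProd U - Pu)) := by ring
      _ ≤ M * A * (n * (2 ^ n * Pu)) := by gcongr
      _ = (2 * n * 2 ^ n * M) * (A * Pu / 2) := by ring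
      _ ≤ (δ * W) * (A * Pu / 2) := by
          have := succProd_pos T
          gcongr
      _ = W * (δ / 2 * A * Pu) := by ring
  calc δ / 2 ^ (n + 1) * succProd (T ∪ U) = δ / 2 ^ (n + 1) * (A * succProd U) := by
        rw [succProd_union hTU]
    _ ≤ δ / 2 ^ (n + 1) * (A * (2 ^ n * Pu)) := by gcongr; exact (succProd_pos T).le
    _ = Pu * (δ * A) - δ / 2 * A * Pu := by field_simp; ring
    _ ≤ Pu * truncLf n m (rootPoly T) - M * coeffSum n (rootPoly T) * (succProd U - Pu) := by
        linarith [mul_le_mul_of_nonneg_left hT hPu]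
    _ ≤ truncLf n m (rootPoly (T ∪ U)) := hpeel

lemma exists_subset_range_or_le_truncLf {j : ℕ} (hj : j ≤ n) {δ : ℝ} (hδ : 0 < δ)
    (hT : ∀ T : Finset ℕ, #T ≤ j - 2 → NonnegOnNat (rootPoly T) →
      δ * succProd T ≤ truncLf n m (rootPoly T)) :
    ∃ W : ℕ, ∀ S : Finset ℕ, #S ≤ j → NonnegOnNat (rootPoly S) →
      S ⊆ range W ∨ δ / 2 ^ (n + 1) * succProd S ≤ truncLf n m (rootPoly S) := by
  set W₀ := ⌈2 * n * 2 ^ n * momentBound n m / δ⌉₊ + 1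
  have hW₀ : 2 * n * 2 ^ n * momentBound n m ≤ δ * W₀ := by
    rw [← div_le_iff₀' hδ]
    push_cast [W₀]
    linarith [Nat.le_ceil (2 * n * 2 ^ n * momentBound n m / δ)]
  refine ⟨W₀ + j + 1, fun S hS hSnn => ?_⟩
  obtain ⟨g, hgW, hgS⟩ : ∃ g ∈ Icc W₀ (W₀ + j), g ∉ S :=
    exists_mem_notMem_of_card_lt_card (by rw [Nat.card_Icc]; omega)
  obtain ⟨hW₀g, hgj⟩ := mem_Icc.1 hgW
  obtain ⟨T, U, hTU, rfl, hTg, hUg, hU, hTnn⟩ := exists_split_at_nonroot hSnn hgS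
  rcases U.eq_empty_or_nonempty with rfl | hUne
  · left
    intro t ht
    have := hTg t (by simpa using ht)
    exact mem_range.2 (by omega)
  · right
    have hcard := card_union_of_disjoint hTU
    have h2U : 2 ≤ #U := by
      obtain ⟨r, hr⟩ := hU
      have := hUne.card_pos
      omega
    exact le_truncLf_rootPoly_union hTU hδ.le (hT T (by omega) hTnn) hU (by omega)
      (by exact_mod_cast Nat.le_add_left 1 _)
      (fun u hu => by exact_mod_cast hW₀g.trans (hUg u hu).le) hW₀

lemma exists_pos_mul_succProd_le_truncLf {j : ℕ} (hj : j ≤ n)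
    (hpos : ∀ T : Finset ℕ, #T ≤ j → NonnegOnNat (rootPoly T) → 0 < truncLf n m (rootPoly T)) :
    ∃ δ > 0, ∀ T : Finset ℕ, #T ≤ j → NonnegOnNat (rootPoly T) →
      δ * succProd T ≤ truncLf n m (rootPoly T) := by
  classical
  have hnn_empty : NonnegOnNat (rootPoly ∅) := fun x => by simp [rootPoly]
  induction j using Nat.strong_induction_on with
  | _ j ih =>
  rcases Nat.eq_zero_or_pos j with rfl | hj₀
  · refine ⟨_, hpos ∅ le_rfl hnn_empty, fun T hT _ => ?_⟩
    rw [card_eq_zero.1 (Nat.le_zero.1 hT)]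
    simp [succProd]
  obtain ⟨δ₀, hδ₀, hδ₀T⟩ := ih (j - 2) (by omega) (by omega) fun T hT => hpos T (by omega)
  obtain ⟨W, hW⟩ := exists_subset_range_or_le_truncLf hj hδ₀ hδ₀T
  set F := (range W).powerset.filter fun T => #T ≤ j ∧ NonnegOnNat (rootPoly T)
  obtain ⟨T₀, hT₀, hmin⟩ := F.exists_min_image (fun T => truncLf n m (rootPoly T) / succProd T)
    ⟨∅, mem_filter.2 ⟨empty_mem_powerset _, by simp, hnn_empty⟩⟩
  obtain ⟨hT₀j, hT₀nn⟩ := (mem_filter.1 hT₀).2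
  refine ⟨min (δ₀ / 2 ^ (n + 1)) (truncLf n m (rootPoly T₀) / succProd T₀),
    lt_min (by positivity) (div_pos (hpos T₀ hT₀j hT₀nn) (succProd_pos T₀)), fun T hT hTnn => ?_⟩
  have hT_pos := succProd_pos T
  rcases hW T hT hTnn with hTW | hle
  · have := hmin T (mem_filter.2 ⟨mem_powerset.2 hTW, hT, hTnn⟩)
    rw [le_div_iff₀ hT_pos] at this
    exact (mul_le_mul_of_nonneg_right (min_le_right _ _) hT_pos.le).trans this
  · exact (mul_le_mul_of_nonneg_right (min_le_left _ _) hT_pos.le).trans hle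

lemma exists_subset_range_of_truncLf_le {δ : ℝ} (hδ : 0 < δ)
    (hT : ∀ T : Finset ℕ, #T ≤ n - 2 → NonnegOnNat (rootPoly T) →
      δ * succProd T ≤ truncLf n m (rootPoly T)) (c : ℝ) :
    ∃ N : ℕ, ∀ S : Finset ℕ, #S ≤ n → NonnegOnNat (rootPoly S) →
      truncLf n m (rootPoly S) ≤ c → S ⊆ range N := by
  obtain ⟨W, hW⟩ := exists_subset_range_or_le_truncLf le_rfl hδ hT
  set κ := δ / 2 ^ (n + 1)
  have hκ : 0 < κ := by positivity
  refine ⟨max W ⌈c / κ⌉₊, fun S hS hSnn hc => ?_⟩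
  rcases hW S hS hSnn with hSW | hle
  · exact hSW.trans (range_subset_range.2 (le_max_left _ _))
  · intro s hs
    have hs_le : (s : ℝ) + 1 ≤ c / κ := by
      rw [le_div_iff₀ hκ]
      nlinarith [le_succProd_of_mem hs]
    have : s + 1 ≤ ⌈c / κ⌉₊ := by
      exact_mod_cast hs_le.trans (Nat.le_ceil _)
    exact mem_range.2 (by omega)

lemma tendsto_Lf_cofinite_atTop
    (hbdd : ∀ c : ℝ, ∃ N : ℕ, ∀ S : Finset ℕ, #S ≤ n → NonnegOnNat (rootPoly S) →
      truncLf n m (rootPoly S) ≤ c → S ⊆ range N) :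
    Tendsto (fun P : {P // PolyP n P} => Lf P m) cofinite atTop := by
  refine tendsto_atTop.2 fun c => ?_
  obtain ⟨N, hN⟩ := hbdd c
  rw [eventually_cofinite]
  refine (((range N).powerset.image rootPoly).finite_toSet.preimage
    Subtype.val_injective.injOn).subset ?_
  rintro ⟨P, hP⟩ hPc
  replace hPc : Lf P m < c := not_le.1 hPc
  obtain ⟨-, hdeg, ⟨S, hS, rfl⟩, hSnn⟩ := hP
  rw [Lf_eq_truncLf n m hdeg.le] at hPc
  rw [Set.mem_preimage, mem_coe]
  exact mem_image.2 ⟨S, mem_powerset.2 (hN S hS.le hSnn hPc.le), rfl⟩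

end Coercivity

theorem exists_minimizing_poly_general (n : ℕ) (m : ℕ → ℝ) (hm0 : m 0 = 1)
    (hpos : ∀ k, 1 ≤ k → k ≤ n - 2 → ∀ P, PolyP k P → 0 < Lf P m) :
    ∃ Pstar, PolyP n Pstar ∧ ∀ P, PolyP n P → Lf Pstar m ≤ Lf P m := by
  have hposT : ∀ T : Finset ℕ, #T ≤ n - 2 → NonnegOnNat (rootPoly T) →
      0 < truncLf n m (rootPoly T) := by
    intro T hT hTnn
    rcases T.eq_empty_or_nonempty with rfl | hT₀
    · simp [rootPoly, truncLf_one, hm0]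
    · rw [← Lf_eq_truncLf n m (by rw [natDegree_rootPoly]; omega)]
      exact hpos _ (card_pos.2 hT₀) hT _ (polyP_rootPoly hTnn)
  obtain ⟨δ, hδ, hδT⟩ := exists_pos_mul_succProd_le_truncLf (n.sub_le 2) hposT
  have hLf := tendsto_Lf_cofinite_atTop (exists_subset_range_of_truncLf_le hδ hδT)
  have : Nonempty {P // PolyP n P} :=
    ⟨⟨_, card_range n ▸ polyP_rootPoly (nonnegOnNat_rootPoly_range n)⟩⟩
  obtain ⟨⟨Pstar, hPstar⟩, hmin⟩ := hLf.exists_forall_le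
  exact ⟨Pstar, hPstar, fun P hP => hmin ⟨P, hP⟩⟩

/-- If `L_P(m) > 0` for all `P ∈ 𝒫_k`, `1 ≤ k ≤ n-2`, then there is a
minimizing polynomial `P* ∈ 𝒫_n` for `L_·(m)` over `𝒫_n`. -/
theorem exists_minimizing_poly (n : ℕ) (hn : 3 ≤ n) (m : ℕ → ℝ) (hm0 : m 0 = 1)
    (hpos : ∀ k, 1 ≤ k → k ≤ n - 2 → ∀ P, PolyP k P → 0 < Lf P m) :
    ∃ Pstar, PolyP n Pstar ∧ ∀ P, PolyP n P → Lf Pstar m ≤ Lf P m :=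
  exists_minimizing_poly_general n m hm0 hpos
end

section
/- Fix n ≥ 2 and any P_α ∈ 𝒫_n. Then there exists a moment vector m = (m_1,…,m_n) ∈ ℝ^n (with m_0 := 1) which is not realizable on ℕ₀, which satisfies L_P(m) ≥ 0 for all P ∈ 𝒫_n with P ≠ P_α, satisfies L_P(m) > 0 for all P ∈ 𝒫_{n−1}, but has L_{P_α}(m) < 0. -/
/-!
Let `S ⊆ ℕ₀` be the root set of `P_α`. Take the moments of the uniform distribution on `S` and
lower the top moment `m_n` by `1/(2n)`; then `L_P(m) = (Σ_{a ∈ S} P(a) - p_n / 2) / n`.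
For `P = P_α` this is `-1/(2n) < 0`, and as `L_P(m) ≥ 0` for every realizable `m` and every `P`
nonnegative on `ℕ₀`, `m` is not realizable. Any other `P ∈ 𝒫_n ∪ 𝒫_{n-1}` misses some `a ∈ S`
as a root, and there `P(a)` is a nonzero nonnegative integer, so `Σ_{a ∈ S} P(a) ≥ 1 > p_n / 2`.
-/

open Polynomial

open Finset

section Lf

variable (P : ℝ[X])

lemma Lf_sub (m m' : ℕ → ℝ) : Lf P (fun k => m k - m' k) = Lf P m - Lf P m' := by
  simp only [Lf, Polynomial.sum_def, mul_sub, sum_sub_distrib]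

lemma Lf_div_const (m : ℕ → ℝ) (c : ℝ) : Lf P (fun k => m k / c) = Lf P m / c := by
  simp only [Lf, Polynomial.sum_def, mul_div_assoc', sum_div]

lemma Lf_sum {ι : Type*} (s : Finset ι) (m : ι → ℕ → ℝ) :
    Lf P (fun k => ∑ i ∈ s, m i k) = ∑ i ∈ s, Lf P (m i) := by
  simp only [Lf, Polynomial.sum_def, mul_sum]
  exact sum_comm

lemma Lf_pow (x : ℝ) : Lf P (fun k => x ^ k) = P.eval x :=
  (eval_eq_sum).symm

lemma Lf_ite_eq (n : ℕ) (c : ℝ) : Lf P (fun k => if k = n then c else 0) = P.coeff n * c := by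
  simp only [Lf, Polynomial.sum_def, mul_ite, mul_zero, sum_ite_eq']
  split_ifs with h
  · rfl
  · rw [notMem_support_iff.mp h, zero_mul]

variable {P}

lemma hasSum_eval_mul_of_hasSum_pow_mul {j : ℕ} {m μ : ℕ → ℝ}
    (hμ : ∀ k ≤ j, HasSum (fun x : ℕ => (x : ℝ) ^ k * μ x) (m k)) (hP : P.natDegree ≤ j) :
    HasSum (fun x : ℕ => P.eval (x : ℝ) * μ x) (Lf P m) := by
  have hsum := hasSum_sum fun k hk =>
    (hμ k ((le_natDegree_of_mem_supp k hk).trans hP)).mul_left (P.coeff k)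
  have heval : (fun x : ℕ => P.eval (x : ℝ) * μ x) =
      fun x : ℕ => ∑ k ∈ P.support, P.coeff k * ((x : ℝ) ^ k * μ x) := by
    funext x
    simp only [eval_eq_sum, Polynomial.sum_def, sum_mul, mul_assoc]
  rwa [heval]

lemma Lf_nonneg_of_realizableN0 {j : ℕ} {m : ℕ → ℝ} (hm : RealizableN0 j m)
    (hP : P.natDegree ≤ j) (hnn : ∀ x : ℕ, 0 ≤ P.eval (x : ℝ)) : 0 ≤ Lf P m := by
  obtain ⟨μ, hμ0, hμ⟩ := hm
  exact (hasSum_eval_mul_of_hasSum_pow_mul hμ hP).nonneg fun x => mul_nonneg (hnn x) (hμ0 x)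

end Lf

lemma one_le_eval_prod_X_sub_C {T : Finset ℕ} {a : ℕ} (ha : a ∉ T)
    (hnn : 0 ≤ (∏ b ∈ T, (X - C (b : ℝ))).eval (a : ℝ)) :
    1 ≤ (∏ b ∈ T, (X - C (b : ℝ))).eval (a : ℝ) := by
  have hcast : (∏ b ∈ T, (X - C (b : ℝ))).eval (a : ℝ) =
      ((∏ b ∈ T, ((a : ℤ) - b) : ℤ) : ℝ) := by
    simp [eval_prod]
  have hne : ∏ b ∈ T, ((a : ℤ) - b) ≠ 0 := prod_ne_zero_iff.mpr fun b hb =>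
    sub_ne_zero.mpr (by exact_mod_cast (ne_of_mem_of_not_mem hb ha).symm)
  rw [hcast] at hnn ⊢
  have : (0 : ℤ) ≤ ∏ b ∈ T, ((a : ℤ) - b) := by exact_mod_cast hnn
  exact_mod_cast (show (1 : ℤ) ≤ ∏ b ∈ T, ((a : ℤ) - b) by omega)

noncomputable def perturbedUniformMoments (S : Finset ℕ) (k : ℕ) : ℝ :=
  ((∑ a ∈ S, (a : ℝ) ^ k) - if k = #S then 1 / 2 else 0) / #S

lemma perturbedUniformMoments_zero {S : Finset ℕ} (hS : S.Nonempty) :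
    perturbedUniformMoments S 0 = 1 := by
  have hcard : (#S : ℝ) ≠ 0 := by exact_mod_cast hS.card_pos.ne'
  simp [perturbedUniformMoments, (hS.card_pos.ne : 0 ≠ #S), hcard]

lemma Lf_perturbedUniformMoments (P : ℝ[X]) (S : Finset ℕ) :
    Lf P (perturbedUniformMoments S) = ((∑ a ∈ S, P.eval (a : ℝ)) - P.coeff #S / 2) / #S := by
  unfold perturbedUniformMoments
  rw [Lf_div_const, Lf_sub, Lf_sum, Lf_ite_eq]
  simp only [Lf_pow, mul_one_div]

lemma Lf_prod_X_sub_C_perturbedUniformMoments_neg {S : Finset ℕ} (hS : S.Nonempty) :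
    Lf (∏ a ∈ S, (X - C (a : ℝ))) (perturbedUniformMoments S) < 0 := by
  have hcoeff : (∏ a ∈ S, (X - C (a : ℝ))).coeff #S = 1 := by
    have h := (monic_prod_X_sub_C (fun a : ℕ => (a : ℝ)) S).coeff_natDegree
    rwa [natDegree_finsetProd_X_sub_C_eq_card] at h
  have hzero : ∀ a ∈ S, (∏ b ∈ S, (X - C (b : ℝ))).eval (a : ℝ) = 0 := fun a ha => by
    rw [eval_prod]
    exact prod_eq_zero ha (by simp)
  rw [Lf_perturbedUniformMoments, sum_eq_zero hzero, hcoeff]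
  exact div_neg_of_neg_of_pos (by norm_num) (by exact_mod_cast hS.card_pos)

lemma Lf_prod_X_sub_C_perturbedUniformMoments_pos {S T : Finset ℕ} (hST : ¬ S ⊆ T)
    (hnn : ∀ x : ℕ, 0 ≤ (∏ b ∈ T, (X - C (b : ℝ))).eval (x : ℝ))
    (hcoeff : (∏ b ∈ T, (X - C (b : ℝ))).coeff #S ≤ 1) :
    0 < Lf (∏ b ∈ T, (X - C (b : ℝ))) (perturbedUniformMoments S) := by
  obtain ⟨a, haS, haT⟩ := not_subset.mp hST
  have hsum : 1 ≤ ∑ x ∈ S, (∏ b ∈ T, (X - C (b : ℝ))).eval (x : ℝ) :=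
    (one_le_eval_prod_X_sub_C haT (hnn a)).trans (single_le_sum (fun x _ => hnn x) haS)
  rw [Lf_perturbedUniformMoments]
  exact div_pos (by linarith) (by exact_mod_cast card_pos.mpr ⟨a, haS⟩)

/-- For every `P_α ∈ 𝒫_n` there is a non-realizable moment vector satisfying all
the conditions of Theorem 3.2 except `L_{P_α}(m) ≥ 0`: it has `L_{P_α}(m) < 0`,
`L_P(m) ≥ 0` for all other `P ∈ 𝒫_n`, and `L_P(m) > 0` for all `P ∈ 𝒫_{n-1}`. -/
theorem exists_nonrealizable_violating_only_Palpha (n : ℕ) (hn : 2 ≤ n)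
    (Pa : Polynomial ℝ) (hPa : PolyP n Pa) :
    ∃ m : ℕ → ℝ, m 0 = 1 ∧ ¬ RealizableN0 n m ∧
      (∀ P, PolyP n P → P ≠ Pa → 0 ≤ Lf P m) ∧
      (∀ P, PolyP (n - 1) P → 0 < Lf P m) ∧
      Lf Pa m < 0 := by
  obtain ⟨-, hdeg, ⟨S, rfl, rfl⟩, hnn⟩ := hPa
  have hS : S.Nonempty := card_pos.mp (by omega)
  have hneg := Lf_prod_X_sub_C_perturbedUniformMoments_neg hS
  refine ⟨perturbedUniformMoments S, perturbedUniformMoments_zero hS,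
    fun h => (Lf_nonneg_of_realizableN0 h hdeg.le hnn).not_gt hneg, ?_, ?_, hneg⟩
  · rintro P ⟨hPmon, hPdeg, ⟨T, hT, rfl⟩, hPnn⟩ hne
    refine (Lf_prod_X_sub_C_perturbedUniformMoments_pos (fun hST => hne ?_) hPnn ?_).le
    · rw [eq_of_subset_of_card_le hST hT.le]
    · rw [← hPdeg, hPmon.coeff_natDegree]
  · rintro P ⟨-, hPdeg, ⟨T, hT, rfl⟩, hPnn⟩
    refine Lf_prod_X_sub_C_perturbedUniformMoments_pos (fun hST => ?_) hPnn ?_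
    · have := card_le_card hST
      omega
    · rw [coeff_eq_zero_of_natDegree_lt (by omega)]
      exact zero_le_one
end

section
/- Let n ≥ 2, m = (m_1,…,m_n) ∈ ℝ^n with m_0 := 1, and suppose (m_1,…,m_{n−1}) is realizable on ℕ₀ and there exist i ∈ {1,2} and P ∈ 𝒫_{n−i} with L_P(m) = 0. Then (m_1,…,m_{n−1}) is realized by a unique probability measure on ℕ₀, and the support of this measure is contained in the set of zeros of P. -/
/-!
Since `P ≥ 0` on `ℕ₀` and `deg P ≤ n - 1`, any realizing measure `μ` satisfies
`Σ_x P(x) μ(x) = L_P(m) = 0`, a series of nonnegative terms; hence `μ` lives on the zero set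
`S` of `P`, which has `n - i ≤ n - 1` points. A measure on `S` is determined by its moments of
order `≤ #S - 1`: pairing it with the Lagrange basis polynomial of `S` at `x` returns its mass
at `x`.
-/

open Polynomial

open Finset

lemma hasSum_eval_mul_of_hasSum_pow {m ν : ℕ → ℝ} {N : ℕ}
    (hν : ∀ k ≤ N, HasSum (fun x : ℕ => (x : ℝ) ^ k * ν x) (m k))
    {Q : ℝ[X]} (hQ : Q.natDegree ≤ N) :
    HasSum (fun x : ℕ => Q.eval (x : ℝ) * ν x) (Lf Q m) := by
  have hsum : HasSum (fun x : ℕ => ∑ k ∈ Q.support, Q.coeff k * ((x : ℝ) ^ k * ν x))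
      (∑ k ∈ Q.support, Q.coeff k * m k) :=
    hasSum_sum fun k hk => (hν k ((le_natDegree_of_mem_supp k hk).trans hQ)).mul_left _
  convert hsum using 1
  · funext x
    rw [eval_eq_sum, Polynomial.sum_def, Finset.sum_mul]
    exact Finset.sum_congr rfl fun k _ => by ring
  · rw [Lf, Polynomial.sum_def]

lemma eval_eq_zero_of_lf_eq_zero {m ν : ℕ → ℝ} {N : ℕ} (hν0 : ∀ x, 0 ≤ ν x)
    (hν : ∀ k ≤ N, HasSum (fun x : ℕ => (x : ℝ) ^ k * ν x) (m k))
    {Q : ℝ[X]} (hQ : Q.natDegree ≤ N) (hQ0 : ∀ x : ℕ, 0 ≤ Q.eval (x : ℝ))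
    (hLQ : Lf Q m = 0) {x : ℕ} (hx : ν x ≠ 0) : Q.eval (x : ℝ) = 0 := by
  have hsum := hasSum_eval_mul_of_hasSum_pow hν hQ
  rw [hLQ, hasSum_zero_iff_of_nonneg fun y => mul_nonneg (hQ0 y) (hν0 y)] at hsum
  exact (mul_eq_zero.mp (congrFun hsum x)).resolve_right hx

lemma mem_of_eval_prod_X_sub_C_eq_zero {S : Finset ℕ} {x : ℕ}
    (h : (∏ a ∈ S, (X - C (a : ℝ))).eval (x : ℝ) = 0) : x ∈ S := by
  obtain ⟨a, ha, hxa⟩ := prod_eq_zero_iff.mp (eval_prod S _ (x : ℝ) ▸ h)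
  rw [eval_sub, eval_X, eval_C, sub_eq_zero, Nat.cast_inj] at hxa
  exact hxa ▸ ha

lemma eq_of_hasSum_pow_of_eq_zero_of_notMem {m ν ν' : ℕ → ℝ} {N : ℕ} {S : Finset ℕ}
    (hS : #S ≤ N + 1)
    (hν : ∀ k ≤ N, HasSum (fun x : ℕ => (x : ℝ) ^ k * ν x) (m k))
    (hν' : ∀ k ≤ N, HasSum (fun x : ℕ => (x : ℝ) ^ k * ν' x) (m k))
    (hνS : ∀ x ∉ S, ν x = 0) (hν'S : ∀ x ∉ S, ν' x = 0) : ν = ν' := by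
  funext x
  by_cases hx : x ∈ S
  · have hinj : Set.InjOn (fun a : ℕ => (a : ℝ)) S := Nat.cast_injective.injOn
    set Q := Lagrange.basis S (fun a : ℕ => (a : ℝ)) x
    have hQ : Q.natDegree ≤ N := by
      rw [Lagrange.natDegree_basis hinj hx]
      omega
    have mass_eq : ∀ μ : ℕ → ℝ,
        (∀ k ≤ N, HasSum (fun y : ℕ => (y : ℝ) ^ k * μ y) (m k)) →
        (∀ y ∉ S, μ y = 0) → μ x = Lf Q m := by
      intro μ hμ hμS
      have hsingle := hasSum_single (f := fun y : ℕ => Q.eval (y : ℝ) * μ y) x fun y hyx => by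
        by_cases hy : y ∈ S
        · rw [Lagrange.eval_basis_of_ne (Ne.symm hyx) hy, zero_mul]
        · rw [hμS y hy, mul_zero]
      rw [Lagrange.eval_basis_self hinj hx, one_mul] at hsingle
      exact hsingle.unique (hasSum_eval_mul_of_hasSum_pow hμ hQ)
    rw [mass_eq ν hν hνS, mass_eq ν' hν' hν'S]
  · rw [hνS x hx, hν'S x hx]

theorem unique_measure_support_in_zeros_general (n : ℕ) (m : ℕ → ℝ)
    (hreal : RealizableN0 (n - 1) m)
    (i : ℕ) (hi : i = 1 ∨ i = 2) (P : Polynomial ℝ) (hP : PolyP (n - i) P)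
    (hLP : Lf P m = 0) :
    ∃ μ : ℕ → ℝ,
      ((∀ x, 0 ≤ μ x) ∧
        ∀ k, k ≤ n - 1 → HasSum (fun x : ℕ => (x : ℝ) ^ k * μ x) (m k)) ∧
      (∀ x : ℕ, μ x ≠ 0 → P.eval (x : ℝ) = 0) ∧
      ∀ μ' : ℕ → ℝ,
        ((∀ x, 0 ≤ μ' x) ∧
          ∀ k, k ≤ n - 1 → HasSum (fun x : ℕ => (x : ℝ) ^ k * μ' x) (m k)) →
        μ' = μ := by
  obtain ⟨-, hdeg, ⟨S, hcard, rfl⟩, hP0⟩ := hP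
  have hdeg' : (∏ a ∈ S, (X - C (a : ℝ))).natDegree ≤ n - 1 := by omega
  have vanish_off_S : ∀ ν : ℕ → ℝ, (∀ x, 0 ≤ ν x) →
      (∀ k ≤ n - 1, HasSum (fun x : ℕ => (x : ℝ) ^ k * ν x) (m k)) → ∀ x ∉ S, ν x = 0 :=
    fun ν hν0 hν x hx => by_contra fun hνx =>
      hx (mem_of_eval_prod_X_sub_C_eq_zero (eval_eq_zero_of_lf_eq_zero hν0 hν hdeg' hP0 hLP hνx))
  obtain ⟨μ, hμ0, hμ⟩ := hreal
  refine ⟨μ, ⟨hμ0, hμ⟩, fun x => eval_eq_zero_of_lf_eq_zero hμ0 hμ hdeg' hP0 hLP,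
    fun μ' ⟨hμ'0, hμ'⟩ => ?_⟩
  exact eq_of_hasSum_pow_of_eq_zero_of_notMem (by omega) hμ' hμ
    (vanish_off_S μ' hμ'0 hμ') (vanish_off_S μ hμ0 hμ)

/-- If `(m_1,…,m_{n-1})` is realizable on `ℕ₀` and `L_P(m) = 0` for some
`P ∈ 𝒫_{n-i}`, `i ∈ {1,2}`, then `(m_1,…,m_{n-1})` is realized by a unique
probability measure on `ℕ₀`, whose support is contained in the zero set of `P`. -/
theorem unique_measure_support_in_zeros (n : ℕ) (hn : 2 ≤ n) (m : ℕ → ℝ)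
    (hm0 : m 0 = 1) (hreal : RealizableN0 (n - 1) m)
    (i : ℕ) (hi : i = 1 ∨ i = 2) (P : Polynomial ℝ) (hP : PolyP (n - i) P)
    (hLP : Lf P m = 0) :
    ∃ μ : ℕ → ℝ,
      ((∀ x, 0 ≤ μ x) ∧
        ∀ k, k ≤ n - 1 → HasSum (fun x : ℕ => (x : ℝ) ^ k * μ x) (m k)) ∧
      (∀ x : ℕ, μ x ≠ 0 → P.eval (x : ℝ) = 0) ∧
      ∀ μ' : ℕ → ℝ,
        ((∀ x, 0 ≤ μ' x) ∧
          ∀ k, k ≤ n - 1 → HasSum (fun x : ℕ => (x : ℝ) ^ k * μ' x) (m k)) →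
        μ' = μ :=
  unique_measure_support_in_zeros_general n m hreal i hi P hP hLP
end

section
/- Let n ≥ 2, m = (m_1,…,m_n) ∈ ℝ^n with m_0 := 1, and suppose (m_1,…,m_{n−1}) is realizable on ℕ₀ and there exist i ∈ {1,2} and P ∈ 𝒫_{n−i} with L_P(m) = 0. Then (m_1,…,m_n) is realizable on ℕ₀ if and only if L_{x^i P}(m) = 0, where (x^i P)(x) := x^i·P(x); moreover the condition L_{x^i P}(m) = 0 uniquely determines m_n in terms of m_1,…,m_{n−1}. -/
/-!
If the moments of a nonnegative `μ` up to `n - 1` are `m` and `L_P(m) = 0` with `P ≥ 0` on `ℕ₀`,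
then `P · μ` vanishes identically, so `μ` lives on the finitely many roots of `P` and has moments
`M` of every order. Any realization of `m` up to order `n` is likewise killed by `P`, hence also by
`x^i P`, so `L_{x^i P}(m) = 0` is necessary. Conversely, since `x^i P` is monic of degree `n` and
`L_{x^i P}(M) = 0`, we get `L_{x^i P}(m) = m_n - M_n`; so the condition says exactly `m_n = M_n`,
and then `μ` itself realizes `m` up to order `n`.
-/

open Polynomial

section Lf

variable {Q : ℝ[X]} {m m' : ℕ → ℝ}

theorem Lf_eq_sum_range {N : ℕ} (hQ : Q.natDegree < N) :
    Lf Q m = ∑ k ∈ Finset.range N, Q.coeff k * m k :=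
  Q.sum_over_range' (f := fun k a => a * m k) (fun _ => zero_mul _) N hQ

theorem Polynomial.Monic.Lf_eq (hQ : Q.Monic) :
    Lf Q m = ∑ k ∈ Finset.range Q.natDegree, Q.coeff k * m k + m Q.natDegree := by
  rw [Lf_eq_sum_range (Nat.lt_succ_self _), Finset.sum_range_succ, hQ.coeff_natDegree, one_mul]

theorem Polynomial.Monic.Lf_sub_Lf (hQ : Q.Monic) (h : ∀ k < Q.natDegree, m k = m' k) :
    Lf Q m - Lf Q m' = m Q.natDegree - m' Q.natDegree := by
  have hsum : ∑ k ∈ Finset.range Q.natDegree, Q.coeff k * m k =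
      ∑ k ∈ Finset.range Q.natDegree, Q.coeff k * m' k :=
    Finset.sum_congr rfl fun k hk => by rw [h k (Finset.mem_range.mp hk)]
  rw [hQ.Lf_eq, hQ.Lf_eq, hsum]
  ring

theorem Polynomial.Monic.Lf_update_natDegree (hQ : Q.Monic) (v : ℝ) :
    Lf Q (Function.update m Q.natDegree v) = Lf Q m - m Q.natDegree + v := by
  have h := hQ.Lf_sub_Lf (m := Function.update m Q.natDegree v) (m' := m)
    fun k hk => Function.update_of_ne hk.ne _ _
  rw [Function.update_self] at h
  linarith

end Lf

def HasMoments (μ : ℕ → ℝ) (d : ℕ) (m : ℕ → ℝ) : Prop :=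
  ∀ k, k ≤ d → HasSum (fun x : ℕ => (x : ℝ) ^ k * μ x) (m k)

namespace HasMoments

variable {μ : ℕ → ℝ} {d : ℕ} {m : ℕ → ℝ} {P : ℝ[X]}

theorem hasSum_eval (h : HasMoments μ d m) (hP : P.natDegree ≤ d) :
    HasSum (fun x : ℕ => P.eval (x : ℝ) * μ x) (Lf P m) := by
  rw [Lf_eq_sum_range (Nat.lt_succ_of_le hP)]
  have hterms := hasSum_sum fun k (hk : k ∈ Finset.range (d + 1)) =>
    (h k (Nat.lt_succ_iff.mp (Finset.mem_range.mp hk))).mul_left (P.coeff k)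
  refine hterms.congr_fun fun x => ?_
  rw [eval_eq_sum_range' (Nat.lt_succ_of_le hP), Finset.sum_mul]
  exact Finset.sum_congr rfl fun k _ => by ring

theorem eval_mul_eq_zero (h : HasMoments μ d m) (hμ : ∀ x, 0 ≤ μ x) (hPd : P.natDegree ≤ d)
    (hP : ∀ x : ℕ, 0 ≤ P.eval (x : ℝ)) (hLP : Lf P m = 0) (x : ℕ) :
    P.eval (x : ℝ) * μ x = 0 := by
  have hsum := h.hasSum_eval hPd
  rw [hLP, hasSum_zero_iff_of_nonneg fun x => mul_nonneg (hP x) (hμ x)] at hsum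
  exact congrFun hsum x

theorem Lf_mul_eq_zero {R : ℝ[X]} (h : HasMoments μ d m) (hRP : (R * P).natDegree ≤ d)
    (hPμ : ∀ x : ℕ, P.eval (x : ℝ) * μ x = 0) : Lf (R * P) m = 0 := by
  refine (h.hasSum_eval hRP).unique ?_
  simpa only [eval_mul, mul_assoc, hPμ, mul_zero] using hasSum_zero

end HasMoments

theorem support_finite_of_eval_mul_eq_zero {μ : ℕ → ℝ} {P : ℝ[X]} (hP : P ≠ 0)
    (hPμ : ∀ x : ℕ, P.eval (x : ℝ) * μ x = 0) : (Function.support μ).Finite := by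
  refine ((finite_setOfPred_isRoot hP).preimage Nat.cast_injective.injOn).subset fun x hx => ?_
  exact (mul_eq_zero.mp (hPμ x)).resolve_right hx

theorem hasMoments_tsum_of_support_finite {μ : ℕ → ℝ} (hμ : (Function.support μ).Finite)
    (d : ℕ) : HasMoments μ d fun k => ∑' x : ℕ, (x : ℝ) ^ k * μ x := fun _ _ =>
  (summable_of_hasFiniteSupport
    (hμ.subset (Function.support_mul_subset_right _ _))).hasSum

theorem realizable_iff_xiP_vanishes_general (n : ℕ) (hn : 2 ≤ n) (m : ℕ → ℝ)
    (hreal : RealizableN0 (n - 1) m)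
    (i : ℕ) (hi : i = 1 ∨ i = 2) (P : Polynomial ℝ) (hP : PolyP (n - i) P)
    (hLP : Lf P m = 0) :
    (RealizableN0 n m ↔ Lf (X ^ i * P) m = 0) ∧
      ∃! v : ℝ, Lf (X ^ i * P) (Function.update m n v) = 0 := by
  obtain ⟨hPmonic, hPdeg, -, hPnn⟩ := hP
  obtain ⟨μ, hμ0, hμ : HasMoments μ (n - 1) m⟩ := hreal
  have hPd : P.natDegree ≤ n - 1 := by omega
  have hQmonic : (X ^ i * P).Monic := (monic_X_pow i).mul hPmonic
  have hQd : (X ^ i * P).natDegree = n := by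
    rw [natDegree_X_pow_mul (n := i) hPmonic.ne_zero]
    omega
  have hPμ := hμ.eval_mul_eq_zero hμ0 hPd hPnn hLP
  set M := fun k => ∑' x : ℕ, (x : ℝ) ^ k * μ x
  have hM : HasMoments μ n M :=
    hasMoments_tsum_of_support_finite (support_finite_of_eval_mul_eq_zero hPmonic.ne_zero hPμ) n
  have hLQm : Lf (X ^ i * P) m = m n - M n := by
    have hdiff := hQmonic.Lf_sub_Lf (m := m) (m' := M) fun k hk =>
      (hμ k (by omega)).unique (hM k (by omega))
    rw [hM.Lf_mul_eq_zero hQd.le hPμ, hQd] at hdiff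
    linarith
  have hupdate (v : ℝ) :
      Lf (X ^ i * P) (Function.update m n v) = Lf (X ^ i * P) m - m n + v := by
    simpa only [hQd] using hQmonic.Lf_update_natDegree (m := m) v
  refine ⟨⟨?_, fun hLQ => ⟨μ, hμ0, fun k hk => ?_⟩⟩, ?_⟩
  · rintro ⟨ν, hν0, hν : HasMoments ν n m⟩
    exact hν.Lf_mul_eq_zero hQd.le (hν.eval_mul_eq_zero hν0 (by omega) hPnn hLP)
  · rcases hk.lt_or_eq with hk | rfl
    · exact hμ k (by omega)
    · rw [show m k = M k by linarith]
      exact hM k le_rfl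
  · refine ⟨m n - Lf (X ^ i * P) m, (hupdate _).trans (by ring), fun v hv => ?_⟩
    linarith [hupdate v, show Lf (X ^ i * P) (Function.update m n v) = 0 from hv]

/-- If `(m_1,…,m_{n-1})` is realizable on `ℕ₀` and `L_P(m) = 0` for some
`P ∈ 𝒫_{n-i}`, `i ∈ {1,2}`, then `(m_1,…,m_n)` is realizable iff
`L_{x^i P}(m) = 0`, and this condition uniquely determines `m_n`. -/
theorem realizable_iff_xiP_vanishes (n : ℕ) (hn : 2 ≤ n) (m : ℕ → ℝ)
    (hm0 : m 0 = 1) (hreal : RealizableN0 (n - 1) m)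
    (i : ℕ) (hi : i = 1 ∨ i = 2) (P : Polynomial ℝ) (hP : PolyP (n - i) P)
    (hLP : Lf P m = 0) :
    (RealizableN0 n m ↔ Lf (X ^ i * P) m = 0) ∧
      ∃! v : ℝ, Lf (X ^ i * P) (Function.update m n v) = 0 :=
  realizable_iff_xiP_vanishes_general n hn m hreal i hi P hP hLP
end

section
/- Let n ≥ 2 and m = (m_1,…,m_n) ∈ ℝ^n with m_0 := 1. If (m_1,…,m_{n−1}) is I-realizable on ℕ₀, then L_Q(m) > 0 for every Q ∈ 𝒫_k and every k with 1 ≤ k ≤ n−1. -/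
/-!
Extend `Q ∈ 𝒫_k` by an even number `d` of consecutive roots beyond its own: the product
`Q * R` stays nonnegative on `ℕ₀`, and choosing the parity of `d` lands it in
`𝒫_{n-1} ∪ 𝒫_{n-2}`, so `L_{QR}(m) > 0`. For a representing measure `μ`,
`L_Q(m) = Σ Q(x) μ(x)` has nonnegative terms; if it vanished, `Q μ` and hence `Q R μ` would
vanish identically, forcing `L_{QR}(m) = 0`.
-/

open Polynomial

lemma hasSum_eval_mul_of_natDegree_le {j : ℕ} {m μ : ℕ → ℝ}
    (hμ : ∀ k ≤ j, HasSum (fun x : ℕ => (x : ℝ) ^ k * μ x) (m k))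
    {Q : ℝ[X]} (hQ : Q.natDegree ≤ j) :
    HasSum (fun x : ℕ => Q.eval (x : ℝ) * μ x) (Lf Q m) := by
  have hterm : ∀ x : ℕ, Q.eval (x : ℝ) * μ x
      = ∑ e ∈ Q.support, Q.coeff e * ((x : ℝ) ^ e * μ x) := fun x => by
    simp only [eval_eq_sum, Polynomial.sum, Finset.sum_mul, mul_assoc]
  rw [funext hterm]
  exact hasSum_sum fun e he => (hμ e ((le_natDegree_of_mem_supp e he).trans hQ)).mul_left _

lemma RealizableN0.lf_pos_of_lf_mul_pos {j : ℕ} {m : ℕ → ℝ} (h : RealizableN0 j m)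
    {Q R : ℝ[X]} (hQ : Q.natDegree ≤ j) (hQR : (Q * R).natDegree ≤ j)
    (hQnn : ∀ x : ℕ, 0 ≤ Q.eval (x : ℝ)) (hpos : 0 < Lf (Q * R) m) : 0 < Lf Q m := by
  obtain ⟨μ, hμnn, hμ⟩ := h
  have hQsum := hasSum_eval_mul_of_natDegree_le hμ hQ
  have hterm_nn : ∀ x : ℕ, 0 ≤ Q.eval (x : ℝ) * μ x :=
    fun x => mul_nonneg (hQnn x) (hμnn x)
  refine (hQsum.nonneg hterm_nn).lt_of_ne fun hzero => hpos.ne' ?_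
  have hQμ : (fun x : ℕ => Q.eval (x : ℝ) * μ x) = 0 :=
    (hasSum_zero_iff_of_nonneg hterm_nn).mp (hzero ▸ hQsum)
  have hQRμ : (fun x : ℕ => (Q * R).eval (x : ℝ) * μ x) = 0 := funext fun x => by
    rw [eval_mul, mul_right_comm, congrFun hQμ x, Pi.zero_apply, zero_mul]
  exact (hasSum_eval_mul_of_natDegree_le hμ hQR).unique (hQRμ ▸ hasSum_zero)

lemma polyP_prod_X_sub_C (S : Finset ℕ)
    (h : ∀ x : ℕ, 0 ≤ (∏ a ∈ S, (X - C (a : ℝ))).eval (x : ℝ)) :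
    PolyP S.card (∏ a ∈ S, (X - C (a : ℝ))) :=
  ⟨monic_prod_X_sub_C _ _, natDegree_finsetProd_X_sub_C_eq_card _ _, ⟨S, rfl, rfl⟩, h⟩

lemma eval_prod_Ico_X_sub_C_nonneg (N d : ℕ) (hd : Even d) (x : ℕ) :
    0 ≤ (∏ a ∈ Finset.Ico N (N + d), (X - C (a : ℝ))).eval (x : ℝ) := by
  rw [eval_prod, Finset.prod_Ico_eq_prod_range, Nat.add_sub_cancel_left]
  simp only [eval_sub, eval_X, eval_C, Nat.cast_add, ← sub_sub]
  exact_mod_cast int_prod_range_nonneg ((x : ℤ) - N) d hd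

lemma PolyP.exists_mul_polyP_add_of_even {k : ℕ} {Q : ℝ[X]} (hQ : PolyP k Q) {d : ℕ}
    (hd : Even d) : ∃ R : ℝ[X], PolyP (k + d) (Q * R) := by
  obtain ⟨-, -, ⟨S, hScard, rfl⟩, hQnn⟩ := hQ
  set N := S.sup id + 1
  have hdisj : Disjoint S (Finset.Ico N (N + d)) := Finset.disjoint_left.mpr fun a haS haT =>
    (Finset.mem_Ico.mp haT).1.not_gt (Nat.lt_succ_of_le (Finset.le_sup (f := id) haS))
  refine ⟨∏ a ∈ Finset.Ico N (N + d), (X - C (a : ℝ)), ?_⟩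
  rw [← Finset.prod_union hdisj]
  convert polyP_prod_X_sub_C _ fun x => ?_ using 1
  · rw [Finset.card_union_of_disjoint hdisj, hScard, Nat.card_Ico, Nat.add_sub_cancel_left]
  · rw [Finset.prod_union hdisj, eval_mul]
    exact mul_nonneg (hQnn x) (eval_prod_Ico_X_sub_C_nonneg N d hd x)

theorem pos_of_Irealizable_general (n : ℕ) (m : ℕ → ℝ)
    (hI : IRealizable (n - 1) m) :
    ∀ k, 1 ≤ k → k ≤ n - 1 → ∀ Q, PolyP k Q → 0 < Lf Q m := by
  intro k _ hk Q hQ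
  obtain ⟨d, hd, hkd⟩ : ∃ d, Even d ∧ (k + d = n - 1 ∨ k + d = n - 1 - 1) := by
    rcases Nat.even_or_odd (n - 1 - k) with he | ⟨r, hr⟩
    · exact ⟨n - 1 - k, he, Or.inl (by omega)⟩
    · exact ⟨r + r, ⟨r, rfl⟩, Or.inr (by omega)⟩
  obtain ⟨R, hR⟩ := hQ.exists_mul_polyP_add_of_even hd
  have hpos : 0 < Lf (Q * R) m :=
    hI.2 _ (by rcases hkd with h | h <;> simp only [← h, hR, true_or, or_true])
  exact hI.1.lf_pos_of_lf_mul_pos (hQ.2.1.trans_le hk) (by rw [hR.2.1]; omega) hQ.2.2.2 hpos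

/-- If `(m_1,…,m_{n-1})` is I-realizable on `ℕ₀` then `L_Q(m) > 0` for all
`Q ∈ 𝒫_k`, `1 ≤ k ≤ n-1`. -/
theorem pos_of_Irealizable (n : ℕ) (hn : 2 ≤ n) (m : ℕ → ℝ) (hm0 : m 0 = 1)
    (hI : IRealizable (n - 1) m) :
    ∀ k, 1 ≤ k → k ≤ n - 1 → ∀ Q, PolyP k Q → 0 < Lf Q m :=
  pos_of_Irealizable_general n m hI
end

section
/- Let m_1, m_2 ∈ ℝ with m_1 > 0, write k_1 := ⌊m_1⌋ and θ_1 := m_1 − k_1. Then the polynomial P(x) = (x−k_1)(x−k_1−1) satisfies L_P(m) ≤ L_Q(m) for every Q ∈ 𝒫_2, and (m_1, m_2) is realizable on ℕ₀ if and only if m_2 − m_1² ≥ θ_1(1−θ_1); it is I-realizable if this inequality is strict and B-realizable if equality holds. -/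
open Polynomial

/-!
Write `P_t = (x - t)(x - t - 1)`. For `m 0 = 1`, `L_{P_t}(m) = (m 2 - m 1 ^ 2) + (m 1 - t)(m 1 - t - 1)`,
and over integers `t` the second term is minimal at `t = ⌊m 1⌋`, where it is `-θ₁(1 - θ₁)`; since
`𝒫_2` consists of the `P_k`, `k ∈ ℕ₀`, and `𝒫_1 = {x}`, everything reduces to realizability being
equivalent to `L_{P_{⌊m 1⌋}}(m) ≥ 0`. Necessity holds because `P_k ≥ 0` on `ℕ₀`. For sufficiency put
mass on `a`, `a + 1` and a far point `c`, where `a < m 1 ≤ a + 1`: the weights of the three-point law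
with moments `m` are nonnegative once `c` is large.
-/

noncomputable def consecutiveQuadratic (t : ℝ) : ℝ[X] := (X - C t) * (X - C (t + 1))

lemma consecutiveQuadratic_eq (t : ℝ) :
    consecutiveQuadratic t = X ^ 2 - C (2 * t + 1) * X + C (t * (t + 1)) := by
  simp only [consecutiveQuadratic, map_add, map_mul, map_one, map_ofNat]; ring

lemma natDegree_consecutiveQuadratic (t : ℝ) : (consecutiveQuadratic t).natDegree = 2 := by
  rw [consecutiveQuadratic, natDegree_mul (X_sub_C_ne_zero _) (X_sub_C_ne_zero _),
    natDegree_X_sub_C, natDegree_X_sub_C]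

lemma consecutiveQuadratic_eval_intCast_nonneg (k x : ℤ) :
    0 ≤ (consecutiveQuadratic k).eval (x : ℝ) := by
  have : 0 ≤ (x - k) * (x - (k + 1)) := by
    rcases le_or_gt x k with h | h <;> nlinarith
  simp only [consecutiveQuadratic, eval_mul, eval_sub, eval_X, eval_C]
  exact_mod_cast this

lemma Lf_eq_sum_range_s10 {P : ℝ[X]} {n : ℕ} (hP : P.natDegree < n) (m : ℕ → ℝ) :
    Lf P m = ∑ i ∈ Finset.range n, P.coeff i * m i :=
  P.sum_over_range' (fun i => zero_mul (m i)) n hP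

lemma Lf_X (m : ℕ → ℝ) : Lf X m = m 1 := by
  simp [Lf, sum_X_index]

lemma Lf_consecutiveQuadratic {m : ℕ → ℝ} (hm0 : m 0 = 1) (t : ℝ) :
    Lf (consecutiveQuadratic t) m = m 2 - m 1 ^ 2 + (m 1 - t) * (m 1 - t - 1) := by
  rw [Lf_eq_sum_range_s10 (n := 3) (by rw [natDegree_consecutiveQuadratic]; norm_num),
    consecutiveQuadratic_eq]
  simp only [Finset.sum_range_succ, Finset.range_zero, Finset.sum_empty, coeff_add, coeff_sub,
    coeff_X_pow, coeff_C_mul, coeff_X, coeff_C, hm0]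
  norm_num
  ring

lemma sub_floor_mul_sub_floor_sub_one_le (t : ℝ) (k : ℤ) :
    (t - ⌊t⌋) * (t - ⌊t⌋ - 1) ≤ (t - k) * (t - k - 1) := by
  have hlo := Int.floor_le t
  have hhi := Int.lt_floor_add_one t
  rcases lt_trichotomy k ⌊t⌋ with h | rfl | h
  · have : (k : ℝ) + 1 ≤ ⌊t⌋ := by exact_mod_cast h
    nlinarith
  · rfl
  · have : (⌊t⌋ : ℝ) + 1 ≤ k := by exact_mod_cast h
    nlinarith

lemma polyP_two_consecutiveQuadratic {k : ℤ} (hk : 0 ≤ k) :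
    PolyP 2 (consecutiveQuadratic k) := by
  lift k to ℕ using hk
  refine ⟨(monic_X_sub_C _).mul (monic_X_sub_C _), natDegree_consecutiveQuadratic _,
    ⟨{k, k + 1}, by simp, ?_⟩,
    fun x => by exact_mod_cast consecutiveQuadratic_eval_intCast_nonneg k x⟩
  rw [Finset.prod_insert (by simp), Finset.prod_singleton, consecutiveQuadratic]
  push_cast; rfl

lemma PolyP.eq_consecutiveQuadratic {Q : ℝ[X]} (hQ : PolyP 2 Q) :
    ∃ k : ℕ, Q = consecutiveQuadratic k := by
  obtain ⟨-, -, ⟨S, hcard, rfl⟩, hpos⟩ := hQ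
  obtain ⟨u, v, huv, rfl⟩ := Finset.card_eq_two.mp hcard
  clear hcard
  wlog h : u < v generalizing u v
  · rw [Finset.pair_comm] at hpos ⊢
    exact this v u huv.symm hpos (huv.lt_or_gt.resolve_left h)
  rw [Finset.prod_insert (by simpa using huv), Finset.prod_singleton] at hpos ⊢
  obtain rfl : v = u + 1 := by
    by_contra hne
    have hv : (u : ℝ) + 2 ≤ v := by exact_mod_cast (by omega : u + 2 ≤ v)
    have := hpos (u + 1)
    simp only [eval_mul, eval_sub, eval_X, eval_C, Nat.cast_add, Nat.cast_one] at this
    nlinarith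
  exact ⟨u, by push_cast; rfl⟩

lemma PolyP.eq_X {Q : ℝ[X]} (hQ : PolyP 1 Q) : Q = X := by
  obtain ⟨-, -, ⟨S, hcard, rfl⟩, hpos⟩ := hQ
  obtain ⟨a, rfl⟩ := Finset.card_eq_one.mp hcard
  have := hpos 0
  simp only [Finset.prod_singleton, eval_sub, eval_X, eval_C, Nat.cast_zero] at this ⊢
  obtain rfl : a = 0 := by
    exact_mod_cast (le_antisymm (by linarith) (Nat.cast_nonneg a) : (a : ℝ) = 0)
  simp

lemma hasSum_eval_mul {j : ℕ} {m : ℕ → ℝ} {μ : ℕ → ℝ}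
    (hμ : ∀ k ≤ j, HasSum (fun x : ℕ => (x : ℝ) ^ k * μ x) (m k)) {P : ℝ[X]}
    (hP : P.natDegree ≤ j) :
    HasSum (fun x : ℕ => P.eval (x : ℝ) * μ x) (Lf P m) := by
  have hlt : P.natDegree < j + 1 := Nat.lt_succ_of_le hP
  simp only [eval_eq_sum_range' hlt, Finset.sum_mul, Lf_eq_sum_range_s10 hlt, mul_assoc]
  exact hasSum_sum fun i hi => (hμ i (Nat.lt_succ_iff.mp (Finset.mem_range.mp hi))).mul_left _

lemma RealizableN0.Lf_nonneg {j : ℕ} {m : ℕ → ℝ} (h : RealizableN0 j m) {P : ℝ[X]}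
    (hP : P.natDegree ≤ j) (hpos : ∀ x : ℕ, 0 ≤ P.eval (x : ℝ)) : 0 ≤ Lf P m := by
  obtain ⟨μ, hμ0, hμ⟩ := h
  exact hasSum_le (fun x => mul_nonneg (hpos x) (hμ0 x)) hasSum_zero (hasSum_eval_mul hμ hP)

lemma realizableN0_of_atoms {ι : Type*} [Fintype ι] {j : ℕ} {m : ℕ → ℝ} (p : ι → ℕ)
    (w : ι → ℝ) (hw : ∀ i, 0 ≤ w i) (hm : ∀ k ≤ j, ∑ i, (p i : ℝ) ^ k * w i = m k) :
    RealizableN0 j m := by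
  refine ⟨fun x => ∑ i, if x = p i then w i else 0, fun x => Finset.sum_nonneg fun i _ => ?_,
    fun k hk => ?_⟩
  · split_ifs
    exacts [hw i, le_rfl]
  · rw [← hm k hk]
    simp only [Finset.mul_sum]
    refine hasSum_sum fun i _ => ?_
    convert hasSum_ite_eq (p i) ((p i : ℝ) ^ k * w i) using 1
    ext x
    split_ifs with h <;> simp [h]

lemma realizableN0_two_of_Lf_consecutiveQuadratic_nonneg {m : ℕ → ℝ} (hm0 : m 0 = 1) {a : ℤ}
    (ha : 0 ≤ a) (hlo : a < m 1) (hhi : m 1 ≤ a + 1)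
    (hL : 0 ≤ Lf (consecutiveQuadratic a) m) : RealizableN0 2 m := by
  lift a to ℕ using ha
  push_cast at hlo hhi hL
  set L := Lf (consecutiveQuadratic a) m with hLdef
  rw [Lf_consecutiveQuadratic hm0] at hLdef
  obtain ⟨c, hc, hcL⟩ := ((Filter.eventually_ge_atTop (a + 2)).and
    ((tendsto_natCast_atTop_atTop.atTop_mul_const (sub_pos.mpr hlo)).eventually_ge_atTop
      (L + (a + 1) * (m 1 - a)))).exists
  have hc : (a : ℝ) + 2 ≤ c := by exact_mod_cast hc
  have hca : (0 : ℝ) < c - a := by linarith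
  have hcb : (0 : ℝ) < c - (a + 1) := by linarith
  -- The weights solving the moment equations on `{a, a + 1, c}`; as `c → ∞` they tend to the
  -- two-point law on `{a, a + 1}` with mean `m 1`, and `L` is the variance it lacks.
  refine realizableN0_of_atoms ![a, a + 1, c]
    ![(a + 1 - m 1) + L / (c - a), (m 1 - a) - L / (c - (a + 1)),
      L / ((c - a) * (c - (a + 1)))]
    (fun i => ?_) (fun k hk => ?_)
  · fin_cases i
    · exact add_nonneg (by simpa using hhi) (div_nonneg hL hca.le)
    · simp only [Fin.mk_one, Matrix.cons_val_one, Matrix.cons_val_zero, sub_nonneg]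
      rw [div_le_iff₀ hcb]
      nlinarith
    · exact div_nonneg hL (by positivity)
  · simp only [Fin.sum_univ_three, Matrix.cons_val_zero, Matrix.cons_val_one,
      Matrix.cons_val_two, Matrix.tail_cons, Matrix.head_cons, hLdef]
    push_cast
    field_simp
    interval_cases k
    · rw [hm0]; ring
    · ring
    · ring

lemma realizableN0_two_iff {m : ℕ → ℝ} (hm0 : m 0 = 1) (h1 : 0 < m 1) :
    RealizableN0 2 m ↔ 0 ≤ Lf (consecutiveQuadratic ⌊m 1⌋) m := by
  refine ⟨fun h => h.Lf_nonneg (natDegree_consecutiveQuadratic _).le fun x => by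
    exact_mod_cast consecutiveQuadratic_eval_intCast_nonneg ⌊m 1⌋ x, fun hL => ?_⟩
  rcases (Int.floor_le (m 1)).eq_or_lt with hint | hfrac
  · have hpos : 0 < ⌊m 1⌋ := by exact_mod_cast hint ▸ h1
    have hzero : m 1 - ⌊m 1⌋ = 0 := by linarith
    refine realizableN0_two_of_Lf_consecutiveQuadratic_nonneg hm0 (a := ⌊m 1⌋ - 1) (by omega)
      (by push_cast; linarith) (by push_cast; linarith) ?_
    rw [Lf_consecutiveQuadratic hm0, hzero, zero_mul, add_zero] at hL
    rw [Lf_consecutiveQuadratic hm0, Int.cast_sub, Int.cast_one,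
      show m 1 - (⌊m 1⌋ - 1) - 1 = m 1 - ⌊m 1⌋ by ring, hzero, mul_zero, add_zero]
    exact hL
  · exact realizableN0_two_of_Lf_consecutiveQuadratic_nonneg hm0 (Int.floor_nonneg.mpr h1.le)
      hfrac (Int.lt_floor_add_one _).le hL

lemma Lf_consecutiveQuadratic_floor_le {m : ℕ → ℝ} (hm0 : m 0 = 1) {Q : ℝ[X]} (hQ : PolyP 2 Q) :
    Lf (consecutiveQuadratic ⌊m 1⌋) m ≤ Lf Q m := by
  obtain ⟨k, rfl⟩ := hQ.eq_consecutiveQuadratic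
  rw [Lf_consecutiveQuadratic hm0, Lf_consecutiveQuadratic hm0]
  have := sub_floor_mul_sub_floor_sub_one_le (m 1) k
  push_cast at this
  linarith

/-- The `n = 2` case: with `k₁ = ⌊m₁⌋` and `θ₁ = m₁ - k₁`, the polynomial
`(x-k₁)(x-k₁-1)` minimizes `L_·(m)` over `𝒫_2`, and `(m₁,m₂)` is realizable on
`ℕ₀` iff `m₂ - m₁² ≥ θ₁(1-θ₁)` (I-realizable if strict, B-realizable if equality). -/
theorem case_n2 (m : ℕ → ℝ) (hm0 : m 0 = 1) (h1 : 0 < m 1)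
    (k1 : ℤ) (hk1 : k1 = ⌊m 1⌋) (θ1 : ℝ) (hθ1 : θ1 = m 1 - (k1 : ℝ)) :
    (∀ Q, PolyP 2 Q →
        Lf ((X - C (k1 : ℝ)) * (X - C ((k1 : ℝ) + 1))) m ≤ Lf Q m) ∧
      (RealizableN0 2 m ↔ θ1 * (1 - θ1) ≤ m 2 - m 1 ^ 2) ∧
      (θ1 * (1 - θ1) < m 2 - m 1 ^ 2 → IRealizable 2 m) ∧
      (m 2 - m 1 ^ 2 = θ1 * (1 - θ1) → BRealizable 2 m) := by
  subst hk1 hθ1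
  have hmin := fun Q (hQ : PolyP 2 Q) => Lf_consecutiveQuadratic_floor_le hm0 hQ
  have hL : Lf (consecutiveQuadratic ⌊m 1⌋) m
      = m 2 - m 1 ^ 2 - (m 1 - ⌊m 1⌋) * (1 - (m 1 - ⌊m 1⌋)) := by
    rw [Lf_consecutiveQuadratic hm0]; ring
  have hreal : RealizableN0 2 m ↔ (m 1 - ⌊m 1⌋) * (1 - (m 1 - ⌊m 1⌋)) ≤ m 2 - m 1 ^ 2 :=
    (realizableN0_two_iff hm0 h1).trans (by rw [hL, sub_nonneg])
  refine ⟨hmin, hreal, fun hlt => ⟨hreal.mpr hlt.le, ?_⟩, fun heq => ⟨hreal.mpr heq.ge, ?_⟩⟩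
  · rintro P (hP | hP)
    · linarith [hmin P hP]
    · rw [hP.eq_X, Lf_X]
      exact h1
  · exact ⟨_, Or.inl (polyP_two_consecutiveQuadratic (Int.floor_nonneg.mpr h1.le)),
      by rw [hL, heq, sub_self]⟩
end

section
/- Let n ≥ 4, m = (m_1,…,m_n) ∈ ℝ^n with m_0 := 1, and let Y ∈ ℕ₀ be such that c := (m_2 − (2Y+1)m_1 + Y(Y+1))^{-1} is well defined and positive. Define M_i := c·(m_{i+2} − (2Y+1)m_{i+1} + Y(Y+1)m_i) for i = 0,…,n−2 (so M_0 = 1). If the probability measure σ on ℕ₀ realizes (m_1,…,m_n) (i.e., E_σ[X^k] = m_k for k = 0,…,n), then the measure σ′ defined by dσ′(x) = c·(x−Y)(x−Y−1)·dσ(x) is a probability measure on ℕ₀ realizing (M_1,…,M_{n−2}). -/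
theorem Int.cast_mul_cast_sub_one_nonneg (z : ℤ) : 0 ≤ (z : ℝ) * ((z : ℝ) - 1) := by
  have h : 0 ≤ z * (z - 1) := by nlinarith [Int.le_self_sq z]
  exact_mod_cast h

theorem natCast_sub_mul_natCast_sub_sub_one_nonneg (x y : ℕ) :
    0 ≤ ((x : ℝ) - y) * ((x : ℝ) - y - 1) := by
  simpa using Int.cast_mul_cast_sub_one_nonneg ((x : ℤ) - y)

theorem HasSum.pow_mul_quadratic_weight {ι : Type*} {X σ : ι → ℝ} {m : ℕ → ℝ} (a c : ℝ) (i : ℕ)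
    (h₀ : HasSum (fun x => X x ^ i * σ x) (m i))
    (h₁ : HasSum (fun x => X x ^ (i + 1) * σ x) (m (i + 1)))
    (h₂ : HasSum (fun x => X x ^ (i + 2) * σ x) (m (i + 2))) :
    HasSum (fun x => X x ^ i * (c * (X x - a) * (X x - a - 1) * σ x))
      (c * (m (i + 2) - (2 * a + 1) * m (i + 1) + a * (a + 1) * m i)) := by
  have hsum := ((h₂.sub (h₁.mul_left (2 * a + 1))).add (h₀.mul_left (a * (a + 1)))).mul_left c
  convert hsum using 1
  · rfl
  · ext x
    ring

theorem transformed_measure_realizes_general (n : ℕ) (hn : 4 ≤ n) (m : ℕ → ℝ)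
    (Y : ℕ)
    (hden : 0 < m 2 - (2 * (Y : ℝ) + 1) * m 1 + (Y : ℝ) * ((Y : ℝ) + 1))
    (c : ℝ) (hc : c = (m 2 - (2 * (Y : ℝ) + 1) * m 1 + (Y : ℝ) * ((Y : ℝ) + 1))⁻¹)
    (σ : ℕ → ℝ) (hσ0 : ∀ x, 0 ≤ σ x)
    (hσ : ∀ k, k ≤ n → HasSum (fun x : ℕ => (x : ℝ) ^ k * σ x) (m k)) :
    (∀ x : ℕ, 0 ≤ c * ((x : ℝ) - (Y : ℝ)) * ((x : ℝ) - (Y : ℝ) - 1) * σ x) ∧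
      ∀ i, i ≤ n - 2 →
        HasSum (fun x : ℕ =>
            (x : ℝ) ^ i * (c * ((x : ℝ) - (Y : ℝ)) * ((x : ℝ) - (Y : ℝ) - 1) * σ x))
          (c * (m (i + 2) - (2 * (Y : ℝ) + 1) * m (i + 1) +
            (Y : ℝ) * ((Y : ℝ) + 1) * m i)) := by
  have hc_pos : 0 < c := hc ▸ inv_pos.mpr hden
  refine ⟨fun x => ?_, fun i hi => ?_⟩
  · rw [mul_assoc c]
    exact mul_nonneg (mul_nonneg hc_pos.le (natCast_sub_mul_natCast_sub_sub_one_nonneg x Y))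
      (hσ0 x)
  · exact HasSum.pow_mul_quadratic_weight _ c i (hσ i (by omega)) (hσ (i + 1) (by omega))
      (hσ (i + 2) (by omega))

/-- Lemma 6.5(a): if `σ` realizes `(m_1,…,m_n)` on `ℕ₀` and
`c = (m_2 - (2Y+1)m_1 + Y(Y+1))⁻¹ > 0`, then
`dσ'(x) = c (x-Y)(x-Y-1) dσ(x)` is a probability measure on `ℕ₀` realizing
`M_i = c (m_{i+2} - (2Y+1) m_{i+1} + Y(Y+1) m_i)` for `i ≤ n-2`. -/
theorem transformed_measure_realizes (n : ℕ) (hn : 4 ≤ n) (m : ℕ → ℝ)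
    (hm0 : m 0 = 1) (Y : ℕ)
    (hden : 0 < m 2 - (2 * (Y : ℝ) + 1) * m 1 + (Y : ℝ) * ((Y : ℝ) + 1))
    (c : ℝ) (hc : c = (m 2 - (2 * (Y : ℝ) + 1) * m 1 + (Y : ℝ) * ((Y : ℝ) + 1))⁻¹)
    (σ : ℕ → ℝ) (hσ0 : ∀ x, 0 ≤ σ x)
    (hσ : ∀ k, k ≤ n → HasSum (fun x : ℕ => (x : ℝ) ^ k * σ x) (m k)) :
    (∀ x : ℕ, 0 ≤ c * ((x : ℝ) - (Y : ℝ)) * ((x : ℝ) - (Y : ℝ) - 1) * σ x) ∧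
      ∀ i, i ≤ n - 2 →
        HasSum (fun x : ℕ =>
            (x : ℝ) ^ i * (c * ((x : ℝ) - (Y : ℝ)) * ((x : ℝ) - (Y : ℝ) - 1) * σ x))
          (c * (m (i + 2) - (2 * (Y : ℝ) + 1) * m (i + 1) +
            (Y : ℝ) * ((Y : ℝ) + 1) * m i)) :=
  transformed_measure_realizes_general n hn m Y hden c hc σ hσ0 hσ
end
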